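/- arXiv:1509.06788 — 3 statements merged into one kernel-verified Lean document; each statement's English description precedes it below -/
import Mathlib

section
/- Let X : ℕ × ℝ^m → ℝ^m satisfy the Lipschitz condition |X(n,x₁) - X(n,x₂)| ≤ L|x₁ - x₂| for all n and all x₁, x₂ in the ball B of radius K, and let R : ℕ × B → ℝ^m be bounded. Let x and y be solutions on [n₀, ∞) of x(n+1) - x(n) = X(n, x(n)) + R(n, x(n)) and y(n+1) - y(n) = X(n, y(n)) respectively, with x(n₀) = y(n₀), and suppose both remain in B. Then for all n ≥ n₀, |x(n) - y(n)| ≤ f(n) + L ∑_{k=n₀}^{n-1} f(k)(1+L)^{n-1-k}, where f(n) = |∑_{k=n₀}^{n-1} R(k, x(k))|. -/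
open Finset

theorem stmt_3 (m : ℕ) (K L : ℝ) (hK : 0 < K) (hL : 0 < L)
    (X R : ℕ → EuclideanSpace ℝ (Fin m) → EuclideanSpace ℝ (Fin m))
    (hX : ∀ (n : ℕ) (x₁ x₂ : EuclideanSpace ℝ (Fin m)),
      x₁ ∈ Metric.closedBall 0 K → x₂ ∈ Metric.closedBall 0 K →
      ‖X n x₁ - X n x₂‖ ≤ L * ‖x₁ - x₂‖)
    (hR : ∃ C : ℝ, ∀ (n : ℕ) (z : EuclideanSpace ℝ (Fin m)),
      z ∈ Metric.closedBall 0 K → ‖R n z‖ ≤ C)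
    (n₀ : ℕ) (x y : ℕ → EuclideanSpace ℝ (Fin m))
    (hxeq : ∀ n, n₀ ≤ n → x (n + 1) - x n = X n (x n) + R n (x n))
    (hyeq : ∀ n, n₀ ≤ n → y (n + 1) - y n = X n (y n))
    (hinit : x n₀ = y n₀)
    (hxB : ∀ n, n₀ ≤ n → x n ∈ Metric.closedBall (0 : EuclideanSpace ℝ (Fin m)) K)
    (hyB : ∀ n, n₀ ≤ n → y n ∈ Metric.closedBall (0 : EuclideanSpace ℝ (Fin m)) K) :
    ∀ n, n₀ ≤ n →
      ‖x n - y n‖ ≤ ‖∑ k ∈ Finset.Ico n₀ n, R k (x k)‖ +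
        L * ∑ k ∈ Finset.Ico n₀ n,
          ‖∑ j ∈ Finset.Ico n₀ k, R j (x j)‖ * (1 + L) ^ (n - 1 - k) := by
  set f : ℕ → ℝ := fun n => ‖∑ k ∈ Finset.Ico n₀ n, R k (x k)‖ with hf
  set S : ℕ → ℝ := fun n => ∑ k ∈ Finset.Ico n₀ n, f k * (1 + L) ^ (n - 1 - k) with hS
  have hf0 : ∀ n, 0 ≤ f n := fun n => norm_nonneg _
  have hS0 : ∀ n, 0 ≤ S n := by
    intro n
    apply Finset.sum_nonneg
    intro k _
    exact mul_nonneg (hf0 k) (pow_nonneg (by linarith) _)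
  -- telescoping identity
  have htel : ∀ n, n₀ ≤ n → x n - y n =
      (∑ k ∈ Finset.Ico n₀ n, (X k (x k) - X k (y k))) +
      ∑ k ∈ Finset.Ico n₀ n, R k (x k) := by
    intro n hn
    induction n, hn using Nat.le_induction with
    | base => simp [hinit]
    | succ n hn ih =>
      have h1 : x (n + 1) - y (n + 1) =
          ((x (n + 1) - x n) - (y (n + 1) - y n)) + (x n - y n) := by abel
      rw [h1, hxeq n hn, hyeq n hn, ih,
        Finset.sum_Ico_succ_top hn, Finset.sum_Ico_succ_top hn]
      abel
  -- norm estimate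
  have hbound : ∀ n, n₀ ≤ n →
      ‖x n - y n‖ ≤ f n + L * ∑ k ∈ Finset.Ico n₀ n, ‖x k - y k‖ := by
    intro n hn
    rw [htel n hn]
    calc ‖(∑ k ∈ Finset.Ico n₀ n, (X k (x k) - X k (y k))) +
          ∑ k ∈ Finset.Ico n₀ n, R k (x k)‖
        ≤ ‖∑ k ∈ Finset.Ico n₀ n, (X k (x k) - X k (y k))‖ + f n := norm_add_le _ _
      _ ≤ (∑ k ∈ Finset.Ico n₀ n, ‖X k (x k) - X k (y k)‖) + f n := by
          gcongr; exact norm_sum_le _ _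
      _ ≤ (∑ k ∈ Finset.Ico n₀ n, L * ‖x k - y k‖) + f n := by
          gcongr with k hk
          rw [Finset.mem_Ico] at hk
          exact hX k _ _ (hxB k hk.1) (hyB k hk.1)
      _ = f n + L * ∑ k ∈ Finset.Ico n₀ n, ‖x k - y k‖ := by
          rw [Finset.mul_sum]; ring
  -- recurrence for S
  have hSrec : ∀ n, n₀ ≤ n → S (n + 1) = S n + (f n + L * S n) := by
    intro n hn
    simp only [hS]
    rw [Finset.sum_Ico_succ_top hn]
    have : ∀ k ∈ Finset.Ico n₀ n, f k * (1 + L) ^ (n + 1 - 1 - k)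
        = (1 + L) * (f k * (1 + L) ^ (n - 1 - k)) := by
      intro k hk
      rw [Finset.mem_Ico] at hk
      have hk1 : k ≤ n - 1 := Nat.le_sub_one_of_lt hk.2
      have : n + 1 - 1 - k = (n - 1 - k) + 1 := by omega
      rw [this, pow_succ]; ring
    rw [Finset.sum_congr rfl this, ← Finset.mul_sum]
    simp only [Nat.add_sub_cancel, Nat.sub_self, pow_zero]
    ring
  -- S n = sum of f k + L * S k
  have hSsum : ∀ n, n₀ ≤ n → S n = ∑ k ∈ Finset.Ico n₀ n, (f k + L * S k) := by
    intro n hn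
    induction n, hn using Nat.le_induction with
    | base => simp [hS]
    | succ n hn ih =>
      rw [Finset.sum_Ico_succ_top hn, ← ih, hSrec n hn]
  -- main induction
  have main : ∀ n, n₀ ≤ n → ‖x n - y n‖ ≤ f n + L * S n := by
    intro n hn
    induction n using Nat.strong_induction_on with
    | _ n ih =>
      calc ‖x n - y n‖ ≤ f n + L * ∑ k ∈ Finset.Ico n₀ n, ‖x k - y k‖ := hbound n hn
        _ ≤ f n + L * ∑ k ∈ Finset.Ico n₀ n, (f k + L * S k) := by
            gcongr with k hk
            rw [Finset.mem_Ico] at hk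
            exact ih k hk.2 hk.1
        _ = f n + L * S n := by rw [← hSsum n hn]
  exact main
end

section
/- Under the hypotheses of the total-stability theorem, the following one-step estimate holds and drives the induction: given ε with 0 < ε < ρ, there exist δ < ε and T ∈ ℕ (from uniform asymptotic stability of ψ) such that if |x(n₀) - ψ(n₀)| < δ and y is the solution of the unperturbed equation with y(n₀) = x(n₀), then (a) |y(n) - ψ(n)| < ε/2 for all n ≥ n₀, (b) |y(n₀+T) - ψ(n₀+T)| < δ/2, and if moreover |x(n) - y(n)| < δ/2 for n₀ ≤ n ≤ n₀+T, then |x(n) - ψ(n)| < ε for n₀ ≤ n ≤ n₀+T and |x(n₀+T) - ψ(n₀+T)| < δ. -/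
open Finset

/-- `ψ` is a uniformly asymptotically stable solution (for `n ≥ n₀`) of the
difference equation `Δy(n) = X(n, y(n))`, among solutions remaining in the
closed ball of radius `K`. -/
def UnifAsympStable (m : ℕ) (K : ℝ)
    (X : ℕ → EuclideanSpace ℝ (Fin m) → EuclideanSpace ℝ (Fin m))
    (n₀ : ℕ) (ψ : ℕ → EuclideanSpace ℝ (Fin m)) : Prop :=
  (∀ γ > (0:ℝ), ∃ δ > (0:ℝ), ∀ m₁ : ℕ, n₀ ≤ m₁ →
    ∀ y : ℕ → EuclideanSpace ℝ (Fin m),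
      (∀ n, m₁ ≤ n → y n ∈ Metric.closedBall (0 : EuclideanSpace ℝ (Fin m)) K) →
      (∀ n, m₁ ≤ n → y (n + 1) - y n = X n (y n)) →
      ‖y m₁ - ψ m₁‖ < δ → ∀ n, m₁ ≤ n → ‖y n - ψ n‖ < γ) ∧
  (∃ δ₀ > (0:ℝ), ∀ γ > (0:ℝ), ∃ T : ℕ, ∀ m₁ : ℕ, n₀ ≤ m₁ →
    ∀ y : ℕ → EuclideanSpace ℝ (Fin m),
      (∀ n, m₁ ≤ n → y n ∈ Metric.closedBall (0 : EuclideanSpace ℝ (Fin m)) K) →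
      (∀ n, m₁ ≤ n → y (n + 1) - y n = X n (y n)) →
      ‖y m₁ - ψ m₁‖ < δ₀ → ∀ n, m₁ + T ≤ n → ‖y n - ψ n‖ < γ)

theorem stmt_5 (m : ℕ) (K L ρ : ℝ) (hK : 0 < K) (hL : 0 < L) (hρ : 0 < ρ)
    (X R : ℕ → EuclideanSpace ℝ (Fin m) → EuclideanSpace ℝ (Fin m))
    (hXbdd : ∃ M : ℝ, ∀ (n : ℕ) (z : EuclideanSpace ℝ (Fin m)),
      z ∈ Metric.closedBall 0 K → ‖X n z‖ ≤ M)
    (hXlip : ∀ (n : ℕ) (x₁ x₂ : EuclideanSpace ℝ (Fin m)),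
      x₁ ∈ Metric.closedBall 0 K → x₂ ∈ Metric.closedBall 0 K →
      ‖X n x₁ - X n x₂‖ ≤ L * ‖x₁ - x₂‖)
    (hRbdd : ∃ C : ℝ, ∀ (n : ℕ) (z : EuclideanSpace ℝ (Fin m)),
      z ∈ Metric.closedBall 0 K → ‖R n z‖ ≤ C)
    (hRcont : ∀ η > (0:ℝ), ∃ δ > (0:ℝ), ∀ (n : ℕ) (z₁ z₂ : EuclideanSpace ℝ (Fin m)),
      z₁ ∈ Metric.closedBall 0 K → z₂ ∈ Metric.closedBall 0 K →
      ‖z₁ - z₂‖ < δ → ‖R n z₁ - R n z₂‖ < η)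
    (n₀ : ℕ) (ψ : ℕ → EuclideanSpace ℝ (Fin m))
    (hψeq : ∀ n, n₀ ≤ n → ψ (n + 1) - ψ n = X n (ψ n))
    (hψρ : ∀ n, n₀ ≤ n →
      Metric.closedBall (ψ n) ρ ⊆ interior (Metric.closedBall (0 : EuclideanSpace ℝ (Fin m)) K))
    (hψs : UnifAsympStable m K X n₀ ψ) :
    ∀ ε : ℝ, 0 < ε → ε < ρ →
      ∃ δ : ℝ, 0 < δ ∧ δ < ε ∧ ∃ T : ℕ,
        ∀ x y : ℕ → EuclideanSpace ℝ (Fin m),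
          (∀ n, n₀ ≤ n → x n ∈ Metric.closedBall (0 : EuclideanSpace ℝ (Fin m)) K) →
          (∀ n, n₀ ≤ n → x (n + 1) - x n = X n (x n) + R n (x n)) →
          (∀ n, n₀ ≤ n → y n ∈ Metric.closedBall (0 : EuclideanSpace ℝ (Fin m)) K) →
          (∀ n, n₀ ≤ n → y (n + 1) - y n = X n (y n)) →
          y n₀ = x n₀ →
          ‖x n₀ - ψ n₀‖ < δ →
          (∀ n, n₀ ≤ n → ‖y n - ψ n‖ < ε / 2) ∧
          ‖y (n₀ + T) - ψ (n₀ + T)‖ < δ / 2 ∧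
          ((∀ n, n₀ ≤ n → n ≤ n₀ + T → ‖x n - y n‖ < δ / 2) →
            (∀ n, n₀ ≤ n → n ≤ n₀ + T → ‖x n - ψ n‖ < ε) ∧
            ‖x (n₀ + T) - ψ (n₀ + T)‖ < δ) := by
  intro ε hε hερ
  obtain ⟨hstab, δ₀, hδ₀, hattr⟩ := hψs
  obtain ⟨δ₁, hδ₁, hstab₁⟩ := hstab (ε / 2) (by linarith)
  set δ : ℝ := min δ₁ (min δ₀ (ε / 2)) with hδdef
  have hδpos : 0 < δ := lt_min hδ₁ (lt_min hδ₀ (by linarith))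
  have hδε2 : δ ≤ ε / 2 := le_trans (min_le_right _ _) (min_le_right _ _)
  have hδδ₀ : δ ≤ δ₀ := le_trans (min_le_right _ _) (min_le_left _ _)
  have hδδ₁ : δ ≤ δ₁ := min_le_left _ _
  obtain ⟨T, hT⟩ := hattr (δ / 2) (by linarith)
  refine ⟨δ, hδpos, by linarith, T, ?_⟩
  intro x y hxB hxeq hyB hyeq hy0 hx0
  have hy0ψ : ‖y n₀ - ψ n₀‖ < δ := by rw [hy0]; exact hx0
  have ha : ∀ n, n₀ ≤ n → ‖y n - ψ n‖ < ε / 2 :=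
    hstab₁ n₀ le_rfl y hyB hyeq (lt_of_lt_of_le hy0ψ hδδ₁)
  have hb : ‖y (n₀ + T) - ψ (n₀ + T)‖ < δ / 2 :=
    hT n₀ le_rfl y hyB hyeq (lt_of_lt_of_le hy0ψ hδδ₀) (n₀ + T) le_rfl
  refine ⟨ha, hb, ?_⟩
  intro hxy
  constructor
  · intro n hn hn'
    have := norm_sub_le_norm_sub_add_norm_sub (x n) (y n) (ψ n)
    have h1 := hxy n hn hn'
    have h2 := ha n hn
    calc ‖x n - ψ n‖ ≤ ‖x n - y n‖ + ‖y n - ψ n‖ := this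
      _ < δ / 2 + ε / 2 := by linarith
      _ ≤ ε := by linarith
  · have := norm_sub_le_norm_sub_add_norm_sub (x (n₀ + T)) (y (n₀ + T)) (ψ (n₀ + T))
    have h1 := hxy (n₀ + T) (Nat.le_add_right _ _) le_rfl
    linarith
end

section
/- Let α₀, β₀ > 0. The scalar difference equation Δp(n) = ε p(n)(1 - p(n))(β₀ - (α₀ + β₀) p(n)) on the interval (0,1) has the equilibrium p* = β₀/(α₀ + β₀) ∈ (0,1), and for sufficiently small ε > 0 this equilibrium is asymptotically stable: every solution with initial value in (0,1) converges to p* as n → ∞. -/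
open Filter

set_option maxHeartbeats 1000000 in
theorem stmt_9 (α₀ β₀ : ℝ) (hα₀ : 0 < α₀) (hβ₀ : 0 < β₀) :
    -- p* = β₀/(α₀+β₀) lies in (0,1) and is an equilibrium of the averaged equation
    β₀ / (α₀ + β₀) ∈ Set.Ioo (0:ℝ) 1 ∧
    (β₀ / (α₀ + β₀)) * (1 - β₀ / (α₀ + β₀)) *
      (β₀ - (α₀ + β₀) * (β₀ / (α₀ + β₀))) = 0 ∧
    -- for sufficiently small ε it is asymptotically stable with basin (0,1)
    ∃ ε₀ > (0:ℝ), ∀ ε : ℝ, 0 < ε → ε < ε₀ →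
      ∀ p : ℕ → ℝ, p 0 ∈ Set.Ioo (0:ℝ) 1 →
        (∀ n : ℕ, p (n + 1) - p n = ε * (p n * (1 - p n) * (β₀ - (α₀ + β₀) * p n))) →
        Tendsto p atTop (nhds (β₀ / (α₀ + β₀))) := by
  have hs : (0:ℝ) < α₀ + β₀ := by linarith
  have hs' : α₀ + β₀ ≠ 0 := ne_of_gt hs
  set P := β₀ / (α₀ + β₀) with hPdef
  have hP0 : 0 < P := by rw [hPdef]; positivity
  have hP1 : P < 1 := by rw [hPdef, div_lt_one hs]; linarith
  have hsP : (α₀ + β₀) * P = β₀ := by rw [hPdef]; field_simp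
  clear_value P
  refine ⟨⟨hP0, hP1⟩, by rw [hsP]; ring, 1/(α₀+β₀), by positivity, ?_⟩
  intro ε hε hεs p hp0 hrec
  have hεs1 : ε * (α₀ + β₀) < 1 := by
    have := (lt_div_iff₀ hs).mp hεs; linarith
  -- positive factor
  have hfac : ∀ x : ℝ, 0 ≤ x → x ≤ 1 → 0 < 1 - ε * (α₀ + β₀) * (x * (1 - x)) := by
    intro x hx0 hx1
    nlinarith [mul_nonneg (le_of_lt (mul_pos hε hs)) (sq_nonneg (2*x - 1)),
      mul_pos hε hs]
  -- key identity for the distance to equilibrium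
  have key : ∀ n : ℕ, p (n+1) - P = (p n - P) * (1 - ε * (α₀ + β₀) * (p n * (1 - p n))) := by
    intro n
    have h := hrec n
    have h' : p (n+1) = p n + ε * (p n * (1 - p n) * (β₀ - (α₀ + β₀) * p n)) := by linarith
    rw [h']; linear_combination (-(ε * p n * (1 - p n))) * hsP
  obtain ⟨hq0, hq1⟩ := hp0
  rcases le_total (p 0) P with hside | hside
  · -- p 0 ≤ P : monotone increasing, bounded above by P
    have hinv : ∀ n, p 0 ≤ p n ∧ p n ≤ P := by
      intro n
      induction n with
      | zero => exact ⟨le_refl _, hside⟩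
      | succ n ih =>
        obtain ⟨h1, h2⟩ := ih
        have hx0 : 0 ≤ p n := by linarith
        have hx1 : p n ≤ 1 := by linarith
        have hf := hfac (p n) hx0 hx1
        have hk := key n
        have hle : p (n+1) ≤ P := by nlinarith
        have hmono : p n ≤ p (n+1) := by
          have h := hrec n
          have hβ : 0 ≤ β₀ - (α₀ + β₀) * p n := by
            have := mul_le_mul_of_nonneg_left h2 hs.le
            linarith [hsP]
          have h₁ : 0 ≤ p n * (1 - p n) := mul_nonneg hx0 (by linarith)
          have h₂ := mul_nonneg (mul_nonneg hε.le h₁) hβ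
          nlinarith
        exact ⟨le_trans h1 hmono, hle⟩
    have hmono : Monotone p := by
      apply monotone_nat_of_le_succ
      intro n
      obtain ⟨h1, h2⟩ := hinv n
      have hx0 : 0 ≤ p n := by linarith
      have hx1 : p n ≤ 1 := by linarith
      have h := hrec n
      have hβ : 0 ≤ β₀ - (α₀ + β₀) * p n := by
        have := mul_le_mul_of_nonneg_left h2 hs.le
        linarith [hsP]
      have h₁ : 0 ≤ p n * (1 - p n) := mul_nonneg hx0 (by linarith)
      have h₂ := mul_nonneg (mul_nonneg hε.le h₁) hβ
      nlinarith
    have hbdd : BddAbove (Set.range p) := ⟨P, by rintro _ ⟨n, rfl⟩; exact (hinv n).2⟩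
    have hL : Tendsto p atTop (nhds (⨆ n, p n)) := tendsto_atTop_ciSup hmono hbdd
    set L := ⨆ n, p n with hLdef
    have hLge : p 0 ≤ L := le_ciSup hbdd 0
    have hLle : L ≤ P := ciSup_le fun n => (hinv n).2
    -- pass to the limit in the recurrence
    have h1 : Tendsto (fun n => p (n+1)) atTop (nhds L) :=
      hL.comp (tendsto_add_atTop_nat 1)
    have hdiff : Tendsto (fun n => p (n+1) - p n) atTop (nhds 0) := by
      have := h1.sub hL
      simpa using this
    have hrhs : Tendsto (fun n => ε * (p n * (1 - p n) * (β₀ - (α₀ + β₀) * p n)))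
        atTop (nhds (ε * (L * (1 - L) * (β₀ - (α₀ + β₀) * L)))) := by
      exact tendsto_const_nhds.mul (((hL.mul (tendsto_const_nhds.sub hL)).mul
        (tendsto_const_nhds.sub (tendsto_const_nhds.mul hL))))
    have heq : (0:ℝ) = ε * (L * (1 - L) * (β₀ - (α₀ + β₀) * L)) := by
      apply tendsto_nhds_unique _ hrhs
      exact hdiff.congr (fun n => hrec n)
    have hL0 : 0 < L := lt_of_lt_of_le hq0 hLge
    have hL1 : L < 1 := lt_of_le_of_lt hLle hP1
    have hX : L * (1 - L) * (β₀ - (α₀ + β₀) * L) = 0 := by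
      rcases mul_eq_zero.mp heq.symm with h | h
      · exact absurd h (ne_of_gt hε)
      · exact h
    have hzero : β₀ - (α₀ + β₀) * L = 0 := by
      rcases mul_eq_zero.mp hX with h | h
      · rcases mul_eq_zero.mp h with h' | h'
        · linarith
        · linarith
      · exact h
    have hLP : L = P := by
      have h' : (α₀+β₀) * L = (α₀+β₀) * P := by linarith [hsP]
      exact mul_left_cancel₀ hs' h'
    rwa [hLP] at hL
  · -- P ≤ p 0 : monotone decreasing, bounded below by P
    have hinv : ∀ n, P ≤ p n ∧ p n ≤ p 0 := by
      intro n
      induction n with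
      | zero => exact ⟨hside, le_refl _⟩
      | succ n ih =>
        obtain ⟨h1, h2⟩ := ih
        have hx0 : 0 ≤ p n := by linarith
        have hx1 : p n ≤ 1 := by linarith
        have hf := hfac (p n) hx0 hx1
        have hk := key n
        have hge : P ≤ p (n+1) := by nlinarith
        have hmono : p (n+1) ≤ p n := by
          have h := hrec n
          have hβ : β₀ - (α₀ + β₀) * p n ≤ 0 := by
            have := mul_le_mul_of_nonneg_left h1 hs.le
            linarith [hsP]
          have h₁ : 0 ≤ p n * (1 - p n) := mul_nonneg hx0 (by linarith)
          have h₂ := mul_nonpos_of_nonneg_of_nonpos (mul_nonneg hε.le h₁) hβ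
          nlinarith
        exact ⟨hge, le_trans hmono h2⟩
    have hmono : Antitone p := by
      apply antitone_nat_of_succ_le
      intro n
      obtain ⟨h1, h2⟩ := hinv n
      have hx0 : 0 ≤ p n := by linarith
      have hx1 : p n ≤ 1 := by linarith
      have h := hrec n
      have hβ : β₀ - (α₀ + β₀) * p n ≤ 0 := by
        have := mul_le_mul_of_nonneg_left h1 hs.le
        linarith [hsP]
      have h₁ : 0 ≤ p n * (1 - p n) := mul_nonneg hx0 (by linarith)
      have h₂ := mul_nonpos_of_nonneg_of_nonpos (mul_nonneg hε.le h₁) hβ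
      nlinarith
    have hbdd : BddBelow (Set.range p) := ⟨P, by rintro _ ⟨n, rfl⟩; exact (hinv n).1⟩
    have hL : Tendsto p atTop (nhds (⨅ n, p n)) := tendsto_atTop_ciInf hmono hbdd
    set L := ⨅ n, p n with hLdef
    have hLle : L ≤ p 0 := ciInf_le hbdd 0
    have hLge : P ≤ L := le_ciInf fun n => (hinv n).1
    have h1 : Tendsto (fun n => p (n+1)) atTop (nhds L) :=
      hL.comp (tendsto_add_atTop_nat 1)
    have hdiff : Tendsto (fun n => p (n+1) - p n) atTop (nhds 0) := by
      have := h1.sub hL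
      simpa using this
    have hrhs : Tendsto (fun n => ε * (p n * (1 - p n) * (β₀ - (α₀ + β₀) * p n)))
        atTop (nhds (ε * (L * (1 - L) * (β₀ - (α₀ + β₀) * L)))) := by
      exact tendsto_const_nhds.mul (((hL.mul (tendsto_const_nhds.sub hL)).mul
        (tendsto_const_nhds.sub (tendsto_const_nhds.mul hL))))
    have heq : (0:ℝ) = ε * (L * (1 - L) * (β₀ - (α₀ + β₀) * L)) := by
      apply tendsto_nhds_unique _ hrhs
      exact hdiff.congr (fun n => hrec n)
    have hL0 : 0 < L := lt_of_lt_of_le hP0 hLge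
    have hL1 : L < 1 := lt_of_le_of_lt hLle hq1
    have hX : L * (1 - L) * (β₀ - (α₀ + β₀) * L) = 0 := by
      rcases mul_eq_zero.mp heq.symm with h | h
      · exact absurd h (ne_of_gt hε)
      · exact h
    have hzero : β₀ - (α₀ + β₀) * L = 0 := by
      rcases mul_eq_zero.mp hX with h | h
      · rcases mul_eq_zero.mp h with h' | h'
        · linarith
        · linarith
      · exact h
    have hLP : L = P := by
      have h' : (α₀+β₀) * L = (α₀+β₀) * P := by linarith [hsP]
      exact mul_left_cancel₀ hs' h'
    rwa [hLP] at hL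
end
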